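/- In a unital complex Banach algebra A, the identity element 1 is not a commutator: there exist no a, b ∈ A with ab - ba = 1. -/

import Mathlib

/-!
Wielandt's argument: if `a * b - b * a = 1`, then `a * b ^ (n + 1) - b ^ (n + 1) * a = (n + 1) • b ^ n`,
so `(n + 1) ‖b ^ n‖ ≤ 2 ‖a‖ ‖b‖ ‖b ^ n‖`. The same identity shows inductively that no power of `b`
vanishes, and then `n + 1 ≤ 2 ‖a‖ ‖b‖` for every `n`, which is absurd.
-/

theorem mul_pow_sub_pow_mul_of_mul_sub_mul_eq_one {R : Type*} [Ring R] {a b : R}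
    (hab : a * b - b * a = 1) (n : ℕ) :
    a * b ^ (n + 1) - b ^ (n + 1) * a = (n + 1) • b ^ n := by
  induction n with
  | zero => simpa using hab
  | succ n ih =>
    calc a * b ^ (n + 2) - b ^ (n + 2) * a
        = (a * b ^ (n + 1) - b ^ (n + 1) * a) * b + b ^ (n + 1) * (a * b - b * a) := by
          simp only [pow_succ, mul_sub, sub_mul, mul_assoc]; abel
      _ = (n + 2) • b ^ (n + 1) := by
          rw [ih, hab, mul_one, smul_mul_assoc, ← pow_succ, ← succ_nsmul]

section Normed

variable {A : Type*} [NormedRing A] [NormedAlgebra ℂ A] {a b : A}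

theorem succ_mul_norm_pow_le_of_mul_sub_mul_eq_one (hab : a * b - b * a = 1) (n : ℕ) :
    (n + 1) * ‖b ^ n‖ ≤ 2 * ‖a‖ * ‖b ^ (n + 1)‖ :=
  calc (n + 1) * ‖b ^ n‖ = ‖a * b ^ (n + 1) - b ^ (n + 1) * a‖ := by
        rw [mul_pow_sub_pow_mul_of_mul_sub_mul_eq_one hab, RCLike.norm_nsmul ℂ, nsmul_eq_mul]
        push_cast; ring
    _ ≤ ‖a‖ * ‖b ^ (n + 1)‖ + ‖b ^ (n + 1)‖ * ‖a‖ :=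
        (norm_sub_le _ _).trans (add_le_add (norm_mul_le _ _) (norm_mul_le _ _))
    _ = 2 * ‖a‖ * ‖b ^ (n + 1)‖ := by ring

theorem pow_ne_zero_of_mul_sub_mul_eq_one [Nontrivial A] (hab : a * b - b * a = 1) (n : ℕ) :
    b ^ n ≠ 0 := by
  induction n with
  | zero => simp
  | succ n ih =>
    intro hzero
    have h := succ_mul_norm_pow_le_of_mul_sub_mul_eq_one hab n
    rw [hzero, norm_zero, mul_zero] at h
    exact ih (norm_eq_zero.mp (le_antisymm (nonpos_of_mul_nonpos_right h (by positivity))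
      (norm_nonneg _)))

theorem mul_sub_mul_ne_one [Nontrivial A] (a b : A) : a * b - b * a ≠ 1 := by
  intro hab
  obtain ⟨n, hn⟩ := exists_nat_gt (2 * ‖a‖ * ‖b‖)
  have hpos : 0 < ‖b ^ n‖ := norm_pos_iff.mpr (pow_ne_zero_of_mul_sub_mul_eq_one hab n)
  have hle : (n + 1) * ‖b ^ n‖ ≤ 2 * ‖a‖ * ‖b‖ * ‖b ^ n‖ :=
    calc (n + 1) * ‖b ^ n‖ ≤ 2 * ‖a‖ * ‖b ^ (n + 1)‖ :=
          succ_mul_norm_pow_le_of_mul_sub_mul_eq_one hab n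
      _ ≤ 2 * ‖a‖ * ‖b‖ * ‖b ^ n‖ := by
          rw [mul_assoc _ ‖b‖, mul_comm ‖b‖, pow_succ]
          gcongr
          exact norm_mul_le _ _
  linarith [le_of_mul_le_mul_right hle hpos]

end Normed

theorem stmt4_general {A : Type*} [NormedRing A] [NormedAlgebra ℂ A]
    [Nontrivial A] :
    ¬ ∃ a b : A, a * b - b * a = 1 := by
  rintro ⟨a, b, hab⟩
  exact mul_sub_mul_ne_one a b hab

theorem stmt4 {A : Type*} [NormedRing A] [NormedAlgebra ℂ A] [CompleteSpace A]
    [Nontrivial A] :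
    ¬ ∃ a b : A, a * b - b * a = 1 :=
  stmt4_general
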